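/- (Consistency comparison inequality) Let (Ω, μ) be a probability space, n ≥ 1, and let x, x̂, x̃ : Ω → ℝⁿ be square-integrable measurable functions. Let S̃ and Ŝ be real symmetric positive definite n×n matrices, let m > 0 be the smallest eigenvalue of S̃, and suppose the true filter is consistent: C(x, x̂, Ŝ) = 1. Then |C(x, x̂, Ŝ) − C(x, x̂, S̃)| ≤ |1 − C(x, x̃, S̃)| + (1/(n*m))∫ ‖x̂ − x̃‖² dμ + (2/(n*m)) * (∫ ‖x − x̂‖² dμ)^{1/2} * (∫ ‖x̂ − x̃‖² dμ)^{1/2}, where ‖·‖ denotes the Euclidean norm on ℝⁿ. In particular, a consistent filter (C(x, x̃, S̃) = 1) whose mean estimate x̃ is close to the true posterior mean x̂ in mean square has C(x, x̂, S̃) close to C(x, x̂, Ŝ) = 1. -/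

import Mathlib

/-!
Write `a = x - x̂`, `b = x̂ - x̃` and `B = S̃⁻¹`. Since `x - x̃ = a + b`, the difference
`n (C(x, x̃, S̃) - C(x, x̂, S̃))` is the integral of `aᵀBb + bᵀBa + bᵀBb`. Because every eigenvalue
of `S̃` is at least `m`, `‖B v‖ ≤ m⁻¹ ‖v‖`, so each term is bounded by `m⁻¹` times a product of
norms, and Cauchy–Schwarz in `L²` bounds `∫ ‖a‖ ‖b‖`. The triangle inequality through
`C(x, x̃, S̃)` and `C(x, x̂, Ŝ) = 1` then give the claim.
-/

open MeasureTheory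

/-- The consistency measure `C(x, y, S) = (1/n) ∫ (x − y)ᵀ S⁻¹ (x − y) dμ`. -/
noncomputable def consist {Ω : Type*} [MeasurableSpace Ω] (μ : Measure Ω) (n : ℕ)
    (x y : Ω → Fin n → ℝ) (S : Matrix (Fin n) (Fin n) ℝ) : ℝ :=
  (1 / (n : ℝ)) *
    ∫ ω, dotProduct (fun i => x ω i - y ω i)
      (S⁻¹.mulVec fun i => x ω i - y ω i) ∂μ

open Matrix WithLp
open scoped MatrixOrder

section LinearAlgebra

variable {ι : Type*} [Fintype ι]

lemma abs_dotProduct_le_norm_mul_norm (u v : ι → ℝ) :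
    |u ⬝ᵥ v| ≤ ‖toLp 2 u‖ * ‖toLp 2 v‖ := by
  simpa [EuclideanSpace.inner_toLp_toLp, dotProduct_comm] using
    abs_real_inner_le_norm (toLp 2 u) (toLp 2 v)

lemma dotProduct_self_eq_norm_sq (v : ι → ℝ) : v ⬝ᵥ v = ‖toLp 2 v‖ ^ 2 := by
  rw [← real_inner_self_eq_norm_sq, EuclideanSpace.inner_toLp_toLp]
  simp

lemma abs_add_dotProduct_mulVec_add_sub_le {B : Matrix ι ι ℝ} {c : ℝ}
    (hB : ∀ u v, |u ⬝ᵥ B *ᵥ v| ≤ c * ‖toLp 2 u‖ * ‖toLp 2 v‖) (a b : ι → ℝ) :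
    |(a + b) ⬝ᵥ B *ᵥ (a + b) - a ⬝ᵥ B *ᵥ a| ≤
      c * (‖toLp 2 b‖ ^ 2 + 2 * ‖toLp 2 a‖ * ‖toLp 2 b‖) := by
  have hexpand : (a + b) ⬝ᵥ B *ᵥ (a + b) - a ⬝ᵥ B *ᵥ a =
      a ⬝ᵥ B *ᵥ b + b ⬝ᵥ B *ᵥ a + b ⬝ᵥ B *ᵥ b := by
    simp only [mulVec_add, add_dotProduct, dotProduct_add]
    ring
  rw [hexpand]
  have := abs_add_three (a ⬝ᵥ B *ᵥ b) (b ⬝ᵥ B *ᵥ a) (b ⬝ᵥ B *ᵥ b)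
  linarith [hB a b, hB b a, hB b b]

variable [DecidableEq ι]

lemma Matrix.IsHermitian.mul_dotProduct_self_le {A : Matrix ι ι ℝ} (hA : A.IsHermitian) {m : ℝ}
    (hm : ∀ i, m ≤ hA.eigenvalues i) (v : ι → ℝ) : m * (v ⬝ᵥ v) ≤ v ⬝ᵥ A *ᵥ v := by
  have hle : algebraMap ℝ _ m ≤ A := by
    rw [algebraMap_le_iff_le_spectrum (ha := hA.isSelfAdjoint),
      hA.spectrum_real_eq_range_eigenvalues]
    rintro _ ⟨i, rfl⟩
    exact hm i
  simpa [sub_mulVec, Algebra.algebraMap_eq_smul_one, smul_mulVec, dotProduct_sub] using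
    (le_iff.mp hle).dotProduct_mulVec_nonneg v

lemma Matrix.PosDef.abs_dotProduct_inv_mulVec_le {A : Matrix ι ι ℝ} (hA : A.PosDef) {m : ℝ}
    (hm : 0 < m) (hml : ∀ i, m ≤ hA.1.eigenvalues i) (u v : ι → ℝ) :
    |u ⬝ᵥ A⁻¹ *ᵥ v| ≤ m⁻¹ * ‖toLp 2 u‖ * ‖toLp 2 v‖ := by
  set w := A⁻¹ *ᵥ v
  have hAw : A *ᵥ w = v := by
    rw [mulVec_mulVec, mul_nonsing_inv _ ((isUnit_iff_isUnit_det A).mp hA.isUnit), one_mulVec]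
  -- `m ‖w‖² ≤ wᵀ A w = wᵀ v ≤ ‖w‖ ‖v‖`
  have hw : m * ‖toLp 2 w‖ ≤ ‖toLp 2 v‖ := by
    have hquad := hA.1.mul_dotProduct_self_le hml w
    rw [hAw, dotProduct_self_eq_norm_sq, dotProduct_comm] at hquad
    have := (le_abs_self _).trans (abs_dotProduct_le_norm_mul_norm v w)
    nlinarith [norm_nonneg (toLp 2 w), norm_nonneg (toLp 2 v)]
  calc |u ⬝ᵥ w| ≤ ‖toLp 2 u‖ * ‖toLp 2 w‖ := abs_dotProduct_le_norm_mul_norm u w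
    _ ≤ ‖toLp 2 u‖ * (m⁻¹ * ‖toLp 2 v‖) := by
        gcongr
        rwa [le_inv_mul_iff₀ hm]
    _ = _ := by ring

end LinearAlgebra

section Integration

variable {Ω : Type*} [MeasurableSpace Ω] {μ : Measure Ω} {ι : Type*} [Fintype ι]

lemma integral_norm_mul_norm_le {E : Type*} [NormedAddCommGroup E] {f g : Ω → E}
    (hf : MemLp f 2 μ) (hg : MemLp g 2 μ) :
    ∫ ω, ‖f ω‖ * ‖g ω‖ ∂μ ≤ √(∫ ω, ‖f ω‖ ^ 2 ∂μ) * √(∫ ω, ‖g ω‖ ^ 2 ∂μ) := by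
  have h := integral_mul_norm_le_Lp_mul_Lq Real.HolderConjugate.two_two
    (by simpa using hf) (by simpa using hg)
  simpa only [Real.sqrt_eq_rpow, Real.rpow_two, one_div] using h

lemma MeasureTheory.MemLp.withLp_toLp {f : Ω → ι → ℝ} (hf : MemLp f 2 μ) :
    MemLp (fun ω => WithLp.toLp 2 (f ω)) 2 μ :=
  memLp_piLp_iff.2 (memLp_pi_iff.1 hf)

lemma MeasureTheory.MemLp.integrable_dotProduct_mulVec (B : Matrix ι ι ℝ) {f g : Ω → ι → ℝ}
    (hf : MemLp f 2 μ) (hg : MemLp g 2 μ) :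
    Integrable (fun ω => f ω ⬝ᵥ B *ᵥ g ω) μ := by
  simp only [dotProduct, mulVec]
  refine integrable_finsetSum _ fun i _ => ?_
  refine MemLp.integrable_mul (p := 2) (q := 2) (hf.eval i) ?_
  exact memLp_finsetSum _ fun j _ => (hg.eval j).const_mul (B i j)

lemma abs_integral_add_dotProduct_mulVec_add_sub_le {B : Matrix ι ι ℝ} {c : ℝ} (hc : 0 ≤ c)
    (hB : ∀ u v, |u ⬝ᵥ B *ᵥ v| ≤ c * ‖toLp 2 u‖ * ‖toLp 2 v‖) {a b : Ω → ι → ℝ}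
    (ha : MemLp a 2 μ) (hb : MemLp b 2 μ) :
    |∫ ω, (a ω + b ω) ⬝ᵥ B *ᵥ (a ω + b ω) ∂μ - ∫ ω, a ω ⬝ᵥ B *ᵥ a ω ∂μ| ≤
      c * (∫ ω, ‖toLp 2 (b ω)‖ ^ 2 ∂μ +
        2 * √(∫ ω, ‖toLp 2 (a ω)‖ ^ 2 ∂μ) * √(∫ ω, ‖toLp 2 (b ω)‖ ^ 2 ∂μ)) := by
  have hab : Integrable (fun ω => (a ω + b ω) ⬝ᵥ B *ᵥ (a ω + b ω)) μ :=
    (ha.add hb).integrable_dotProduct_mulVec B (ha.add hb)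
  have hb2 := hb.withLp_toLp.integrable_norm_pow two_ne_zero
  have hab2 : Integrable (fun ω => 2 * (‖toLp 2 (a ω)‖ * ‖toLp 2 (b ω)‖)) μ :=
    (ha.withLp_toLp.norm.integrable_mul (p := 2) (q := 2) hb.withLp_toLp.norm).const_mul 2
  rw [← integral_sub hab (ha.integrable_dotProduct_mulVec B ha)]
  calc _ ≤ ∫ ω, |(a ω + b ω) ⬝ᵥ B *ᵥ (a ω + b ω) - a ω ⬝ᵥ B *ᵥ a ω| ∂μ :=
        abs_integral_le_integral_abs
    _ ≤ ∫ ω, c * (‖toLp 2 (b ω)‖ ^ 2 + 2 * ‖toLp 2 (a ω)‖ * ‖toLp 2 (b ω)‖) ∂μ := by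
        refine integral_mono_of_nonneg (ae_of_all _ fun _ => abs_nonneg _) ?_
          (ae_of_all _ fun ω => abs_add_dotProduct_mulVec_add_sub_le hB (a ω) (b ω))
        simpa only [Pi.add_apply, mul_assoc] using (hb2.add hab2).const_mul c
    _ = c * (∫ ω, ‖toLp 2 (b ω)‖ ^ 2 ∂μ + 2 * ∫ ω, ‖toLp 2 (a ω)‖ * ‖toLp 2 (b ω)‖ ∂μ) := by
        rw [integral_const_mul, ← integral_const_mul 2, ← integral_add hb2 hab2]
        simp only [mul_assoc]
    _ ≤ _ := by
        rw [mul_assoc 2]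
        gcongr
        exact integral_norm_mul_norm_le ha.withLp_toLp hb.withLp_toLp

end Integration

lemma consist_eq_integral {Ω : Type*} [MeasurableSpace Ω] (μ : Measure Ω) (n : ℕ)
    (x y : Ω → Fin n → ℝ) (S : Matrix (Fin n) (Fin n) ℝ) :
    consist μ n x y S = (1 / n) * ∫ ω, (x ω - y ω) ⬝ᵥ S⁻¹ *ᵥ (x ω - y ω) ∂μ :=
  rfl

theorem stmt17 {Ω : Type*} [MeasurableSpace Ω] (μ : Measure Ω)
    (n : ℕ) (x xhat xtil : Ω → Fin n → ℝ)
    (hx2 : MemLp x 2 μ) (hxhat2 : MemLp xhat 2 μ) (hxtil2 : MemLp xtil 2 μ)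
    (Stil Shat : Matrix (Fin n) (Fin n) ℝ)
    (hStilpd : Stil.PosDef)
    (m : ℝ) (hm : 0 < m)
    (hmleast : IsLeast (Set.range hStilpd.1.eigenvalues) m)
    (hcons : consist μ n x xhat Shat = 1) :
    |consist μ n x xhat Shat - consist μ n x xhat Stil| ≤
      |1 - consist μ n x xtil Stil|
        + (1 / ((n : ℝ) * m)) * ∫ ω, ∑ i, (xhat ω i - xtil ω i) ^ 2 ∂μ
        + (2 / ((n : ℝ) * m)) *
            Real.sqrt (∫ ω, ∑ i, (x ω i - xhat ω i) ^ 2 ∂μ) *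
            Real.sqrt (∫ ω, ∑ i, (xhat ω i - xtil ω i) ^ 2 ∂μ) := by
  have hml : ∀ i, m ≤ hStilpd.1.eigenvalues i := fun i => hmleast.2 ⟨i, rfl⟩
  have hdiff := abs_integral_add_dotProduct_mulVec_add_sub_le (inv_nonneg.2 hm.le)
    (hStilpd.abs_dotProduct_inv_mulVec_le hm hml) (hx2.sub hxhat2) (hxhat2.sub hxtil2)
  simp only [Pi.sub_apply, sub_add_sub_cancel, EuclideanSpace.real_norm_sq_eq] at hdiff
  have hshift : |consist μ n x xtil Stil - consist μ n x xhat Stil| ≤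
      1 / n * (m⁻¹ * (∫ ω, ∑ i, (xhat ω i - xtil ω i) ^ 2 ∂μ +
        2 * √(∫ ω, ∑ i, (x ω i - xhat ω i) ^ 2 ∂μ) *
          √(∫ ω, ∑ i, (xhat ω i - xtil ω i) ^ 2 ∂μ))) := by
    rw [consist_eq_integral, consist_eq_integral, ← mul_sub, abs_mul, abs_of_nonneg (by positivity)]
    gcongr
  rw [hcons]
  calc |1 - consist μ n x xhat Stil|
      ≤ |1 - consist μ n x xtil Stil| + |consist μ n x xtil Stil - consist μ n x xhat Stil| :=
        abs_sub_le _ _ _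
    _ ≤ _ := by linear_combination hshift
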